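/- For every finite set D of forbidden patterns, the sequence ((log₂ δ_n(D))/n)_{n≥1} converges as n → ∞; in particular the capacity cap(D) is well defined as a limit and equals the limsup of this sequence. -/

import Mathlib

/-- The integer value of a binary symbol. -/
def boolToInt (b : Bool) : ℤ := if b then 1 else 0

/-- Componentwise difference of two binary words, a word over `{-1, 0, +1}`. -/
def diffWord (u v : List Bool) : List ℤ :=
  List.zipWith (fun a b => boolToInt a - boolToInt b) u v

/-- A forbidden pattern: a nonempty finite word over the alphabet `{-1, 0, +1}`. -/
def IsPattern (p : List ℤ) : Prop :=
  p ≠ [] ∧ ∀ x ∈ p, x = -1 ∨ x = 0 ∨ x = 1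

/-- A code `C` of binary words avoids the forbidden set `D` if no difference of two
distinct code words contains a pattern of `D` as a contiguous subword (factor). -/
def AvoidsCode (D : Finset (List ℤ)) (C : Finset (List Bool)) : Prop :=
  ∀ u ∈ C, ∀ v ∈ C, u ≠ v → ∀ p ∈ D, ¬ p <:+: diffWord u v

/-- `delta D n` : the maximal cardinality of a code of binary words of length `n`
avoiding the forbidden set `D`. -/
noncomputable def delta (D : Finset (List ℤ)) (n : ℕ) : ℕ :=
  sSup {k : ℕ | ∃ C : Finset (List Bool),
    (∀ u ∈ C, u.length = n) ∧ AvoidsCode D C ∧ C.card = k}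

/-- The capacity of a set of forbidden difference patterns. -/
noncomputable def cap (D : Finset (List ℤ)) : ℝ :=
  Filter.limsup (fun n : ℕ => Real.logb 2 (delta D n) / n) Filter.atTop

/-! Cutting every word of an optimal code of length `m + n` after position `m` shows
`δ_{m+n} ≤ δ_m δ_n`: the prefixes form a `D`-avoiding code of length `m`, and within a fibre
of equal prefixes the suffixes form one of length `n`, because a factor of the difference of
two prefixes (or suffixes) is a factor of the difference of the whole words. Hence
`n ↦ log₂ δ_n` is subadditive and bounded below by `0`, and Fekete's lemma gives convergence
of `log₂ δ_n / n`; a convergent sequence has its limit as limsup. -/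

variable {D : Finset (List ℤ)}

theorem diffWord_take (u v : List Bool) (m : ℕ) :
    diffWord (u.take m) (v.take m) = (diffWord u v).take m :=
  List.take_zipWith.symm

theorem diffWord_drop (u v : List Bool) (m : ℕ) :
    diffWord (u.drop m) (v.drop m) = (diffWord u v).drop m :=
  List.drop_zipWith.symm

theorem avoidsCode_singleton (D : Finset (List ℤ)) (u : List Bool) : AvoidsCode D {u} := by
  intro u hu v hv huv
  rw [Finset.mem_singleton] at hu hv
  exact absurd (hu.trans hv.symm) huv

theorem AvoidsCode.mono {C C' : Finset (List Bool)} (hC : AvoidsCode D C) (h : C' ⊆ C) :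
    AvoidsCode D C' :=
  fun u hu v hv => hC u (h hu) v (h hv)

theorem AvoidsCode.image {C : Finset (List Bool)} (hC : AvoidsCode D C)
    (g : List Bool → List Bool) (hg : ∀ u v, diffWord (g u) (g v) <:+: diffWord u v) :
    AvoidsCode D (C.image g) := by
  simp only [AvoidsCode, Finset.forall_mem_image]
  intro u hu v hv hne p hp hpg
  exact hC u hu v hv (fun h => hne (h ▸ rfl)) p hp (hpg.trans (hg u v))

theorem card_le_two_pow_of_length_eq {C : Finset (List Bool)} {n : ℕ}
    (hlen : ∀ u ∈ C, u.length = n) : C.card ≤ 2 ^ n := by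
  simpa [Finset.filter_true_of_mem hlen] using Finset.card_filter_length_eq_le (T := C) (s := n)

def codeSizes (D : Finset (List ℤ)) (n : ℕ) : Set ℕ :=
  {k : ℕ | ∃ C : Finset (List Bool), (∀ u ∈ C, u.length = n) ∧ AvoidsCode D C ∧ C.card = k}

theorem bddAbove_codeSizes (D : Finset (List ℤ)) (n : ℕ) : BddAbove (codeSizes D n) :=
  ⟨2 ^ n, by
    rintro _ ⟨C, hlen, -, rfl⟩
    exact card_le_two_pow_of_length_eq hlen⟩

theorem card_le_delta {C : Finset (List Bool)} {n : ℕ} (hlen : ∀ u ∈ C, u.length = n)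
    (hC : AvoidsCode D C) : C.card ≤ delta D n :=
  le_csSup (bddAbove_codeSizes D n) ⟨C, hlen, hC, rfl⟩

theorem exists_avoidsCode_card_eq_delta (D : Finset (List ℤ)) (n : ℕ) :
    ∃ C : Finset (List Bool), (∀ u ∈ C, u.length = n) ∧ AvoidsCode D C ∧ C.card = delta D n :=
  Nat.sSup_mem (s := codeSizes D n)
    ⟨1, {List.replicate n false}, by simp, avoidsCode_singleton D _, rfl⟩ (bddAbove_codeSizes D n)

theorem one_le_delta (D : Finset (List ℤ)) (n : ℕ) : 1 ≤ delta D n :=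
  card_le_delta (C := {List.replicate n false}) (by simp) (avoidsCode_singleton D _)

theorem delta_add_le_mul (D : Finset (List ℤ)) (m n : ℕ) :
    delta D (m + n) ≤ delta D m * delta D n := by
  obtain ⟨C, hlen, hC, hcard⟩ := exists_avoidsCode_card_eq_delta D (m + n)
  have hprefixes : (C.image (·.take m)).card ≤ delta D m := by
    refine card_le_delta ?_ (hC.image _ fun u v => ?_)
    · simp +contextual [hlen]
    · rw [diffWord_take]
      exact (List.take_prefix _ _).isInfix
  have hfibre (x : List Bool) : (C.filter (·.take m = x)).card ≤ delta D n := by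
    have hinj : Set.InjOn (fun u : List Bool => u.drop m) ↑(C.filter (·.take m = x)) := by
      intro u hu v hv h
      rw [Finset.mem_coe, Finset.mem_filter] at hu hv
      rw [← List.take_append_drop m u, ← List.take_append_drop m v, hu.2, hv.2]
      exact congrArg _ h
    rw [← Finset.card_image_of_injOn hinj]
    refine card_le_delta ?_ ((hC.mono (Finset.filter_subset _ _)).image _ fun u v => ?_)
    · intro _ hw
      obtain ⟨u, hu, rfl⟩ := Finset.mem_image.1 hw
      simp [hlen u (Finset.mem_filter.1 hu).1]
    · rw [diffWord_drop]
      exact (List.drop_suffix _ _).isInfix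
  calc delta D (m + n) = C.card := hcard.symm
    _ ≤ delta D n * (C.image (·.take m)).card :=
      Finset.card_le_mul_card_image C _ fun x _ => hfibre x
    _ ≤ delta D m * delta D n := by
      rw [mul_comm]
      exact Nat.mul_le_mul_right _ hprefixes

theorem subadditive_logb_delta (D : Finset (List ℤ)) :
    Subadditive (fun n => Real.logb 2 (delta D n)) := by
  intro m n
  have hpos (k : ℕ) : (0 : ℝ) < delta D k := by exact_mod_cast one_le_delta D k
  calc Real.logb 2 (delta D (m + n))
      ≤ Real.logb 2 ((delta D m : ℝ) * delta D n) :=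
        Real.logb_le_logb_of_le one_lt_two (hpos _) (by exact_mod_cast delta_add_le_mul D m n)
    _ = Real.logb 2 (delta D m) + Real.logb 2 (delta D n) :=
        Real.logb_mul (hpos m).ne' (hpos n).ne'

theorem logb_delta_nonneg (D : Finset (List ℤ)) (n : ℕ) : 0 ≤ Real.logb 2 (delta D n) :=
  Real.logb_nonneg one_lt_two (by exact_mod_cast one_le_delta D n)

theorem capacity_is_limit_general (D : Finset (List ℤ)) :
    Filter.Tendsto (fun n : ℕ => Real.logb 2 (delta D n) / n)
      Filter.atTop (nhds (cap D)) := by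
  have hbdd : BddBelow (Set.range fun n : ℕ => Real.logb 2 (delta D n) / n) :=
    ⟨0, by
      rintro _ ⟨n, rfl⟩
      exact div_nonneg (logb_delta_nonneg D n) n.cast_nonneg⟩
  have hlim := (subadditive_logb_delta D).tendsto_lim hbdd
  rwa [cap, hlim.limsup_eq]

/-- the sequence `(log₂ δ_n(D)) / n` converges, and its limit is
the capacity (defined as the limsup of the same sequence). -/
theorem capacity_is_limit (D : Finset (List ℤ)) (hD : ∀ p ∈ D, IsPattern p) :
    Filter.Tendsto (fun n : ℕ => Real.logb 2 (delta D n) / n)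
      Filter.atTop (nhds (cap D)) :=
  capacity_is_limit_general D
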